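/- arXiv:2304.10243 — 5 statements merged into one kernel-verified Lean document; each statement's English description precedes it below -/
import Mathlib

section
/- Two signatures σ and σ' on the same graph G are switching equivalent if and only if the signed graphs (G, σ) and (G, σ') have the same set of negative cycles. -/
/-!
Signed (simple) graphs: a signature is `σ : Sym2 V → Bool` (`true` = negative edge).
Switching equivalence, frustration index, negative cycles, criticality, edge-cuts.
-/

variable {V : Type*}

/-- The parity (as a `Bool`) of a `Sym2`-pair with respect to a vertex `2`-coloring `f`;
this is `true` exactly on the edges of the cut determined by `f`. -/
def cutParity (f : V → Bool) : Sym2 V → Bool :=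
  Sym2.lift ⟨fun u v => xor (f u) (f v), fun _ _ => Bool.xor_comm _ _⟩

/-- Two signatures on `G` are switching equivalent if one is obtained from the other by
switching at a set of vertices (encoded by `f : V → Bool`), i.e. the signs of exactly the
edges of the corresponding cut get multiplied by `-`. -/
def SwitchEquiv (G : SimpleGraph V) (σ σ' : Sym2 V → Bool) : Prop :=
  ∃ f : V → Bool, ∀ e ∈ G.edgeSet, σ' e = xor (σ e) (cutParity f e)

/-- The number of negative edges of `(G, σ)`. -/
noncomputable def negEdgeCount (G : SimpleGraph V) (σ : Sym2 V → Bool) : ℕ :=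
  {e ∈ G.edgeSet | σ e = true}.ncard

/-- The frustration index of `(G, σ)`: the minimum number of negative edges over all
signatures switching equivalent to `σ`. -/
noncomputable def frustration (G : SimpleGraph V) (σ : Sym2 V → Bool) : ℕ :=
  sInf {n | ∃ σ' : Sym2 V → Bool, SwitchEquiv G σ σ' ∧ negEdgeCount G σ' = n}

/-- A negative cycle of `(G, σ)`: a cycle with an odd number of negative edges. -/
def IsNegCycle (G : SimpleGraph V) (σ : Sym2 V → Bool) {v : V} (w : G.Walk v v) : Prop :=
  w.IsCycle ∧ Odd (w.edges.countP σ)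

/-- `(G, σ)` is critically `k`-frustrated: its frustration index is `k`, and deleting any
edge decreases the frustration index to `k - 1`. -/
def CriticallyFrustrated (G : SimpleGraph V) (σ : Sym2 V → Bool) (k : ℕ) : Prop :=
  frustration G σ = k ∧ ∀ e ∈ G.edgeSet, frustration (G.deleteEdges {e}) σ = k - 1

/-!
Write `δ = σ ^^ σ'`. A cycle is negative for exactly one of `σ`, `σ'` iff it is `δ`-negative,
and `σ`, `σ'` are switching equivalent iff `δ` is the cut of some `f`, i.e. switching equivalent
to the all-positive signature. A cut meets every closed walk evenly, since along a walk from
`u` to `v` its parity is `f u ^^ f v`. Conversely (Harary), if no cycle is `δ`-negative then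
every closed walk is `δ`-even: shortening a walk to its `bypass` path only removes closed
pieces made of an edge and a path, which are cycles or an edge traversed twice. Hence the
`δ`-parity of a walk from the root of a component to `x` depends only on `x`, and it is the
switching function.
-/

theorem Nat.odd_iff_bodd {n : ℕ} : Odd n ↔ n.bodd = true := by
  rw [Nat.odd_iff, Nat.mod_two_of_bodd]
  cases n.bodd <;> simp

@[simp]
theorem List.bodd_countP_cons {α : Type*} (p : α → Bool) (a : α) (l : List α) :
    ((a :: l).countP p).bodd = (p a ^^ (l.countP p).bodd) := by
  rw [List.countP_cons, Nat.bodd_add]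
  cases p a <;> simp

@[simp]
theorem List.bodd_countP_append {α : Type*} (p : α → Bool) (l l' : List α) :
    ((l ++ l').countP p).bodd = ((l.countP p).bodd ^^ (l'.countP p).bodd) := by
  rw [List.countP_append, Nat.bodd_add]

theorem List.bodd_countP_xor {α : Type*} (l : List α) (p q : α → Bool) :
    (l.countP fun a => p a ^^ q a).bodd = ((l.countP p).bodd ^^ (l.countP q).bodd) := by
  induction l with
  | nil => simp
  | cons a l ih =>
    simp only [List.bodd_countP_cons, ih]
    cases p a <;> cases q a <;> simp

@[simp]
theorem cutParity_mk (f : V → Bool) (u v : V) : cutParity f s(u, v) = (f u ^^ f v) := rfl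

def IsBalanced (G : SimpleGraph V) (σ : Sym2 V → Bool) : Prop :=
  ∀ ⦃v : V⦄ (c : G.Walk v v), ¬ IsNegCycle G σ c

theorem SimpleGraph.Walk.bodd_countP_cutParity {G : SimpleGraph V} (f : V → Bool) {u v : V}
    (p : G.Walk u v) :
    (p.edges.countP (cutParity f)).bodd = (f u ^^ f v) := by
  induction p with
  | nil => simp
  | @cons a b c h p ih =>
    rw [edges_cons, List.bodd_countP_cons, ih, cutParity_mk, Bool.xor_assoc,
      ← Bool.xor_assoc (f b), Bool.xor_self, Bool.false_xor]

namespace IsBalanced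

open SimpleGraph Walk

variable {G : SimpleGraph V} {σ : Sym2 V → Bool}

theorem bodd_countP_cons_eq_false (hσ : IsBalanced G σ) {u w : V} (h : G.Adj u w)
    {p : G.Walk w u} (hp : p.IsPath) : ((cons h p).edges.countP σ).bodd = false := by
  by_cases he : s(u, w) ∈ p.edges
  · -- a path from `w` to `u` containing the edge `uw` is that edge
    rw [hp.eq_adj_toWalk_of_mem_edges (Sym2.eq_swap ▸ he)]
    simp only [edges_cons, Adj.toWalk, edges_nil, Sym2.eq_swap (a := w), List.bodd_countP_cons,
      List.countP_nil, Nat.bodd_zero, Bool.xor_false, Bool.xor_self]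
  · have hc : (cons h p).IsCycle := (cons_isCycle_iff p h).2 ⟨hp, he⟩
    simpa [IsNegCycle, hc, Nat.odd_iff_bodd] using hσ (cons h p)

theorem bodd_countP_bypass [DecidableEq V] (hσ : IsBalanced G σ) {u v : V} (p : G.Walk u v) :
    (p.bypass.edges.countP σ).bodd = (p.edges.countP σ).bodd := by
  induction p with
  | nil => rfl
  | @cons u w v h p ih =>
    simp only [bypass]
    split_ifs with hs
    · have hsplit := congrArg (fun q : G.Walk w v => (q.edges.countP σ).bodd)
        (p.bypass.take_spec hs)
      have hloop := hσ.bodd_countP_cons_eq_false h (p.bypass_isPath.takeUntil hs)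
      simp only [edges_append, List.bodd_countP_append, ih] at hsplit
      rw [edges_cons, List.bodd_countP_cons] at hloop ⊢
      rw [← hsplit, ← Bool.xor_assoc, hloop, Bool.false_xor]
    · rw [edges_cons, edges_cons, List.bodd_countP_cons, List.bodd_countP_cons, ih]

theorem bodd_countP_eq_false (hσ : IsBalanced G σ) {v : V} (c : G.Walk v v) :
    (c.edges.countP σ).bodd = false := by
  classical
  rw [← hσ.bodd_countP_bypass, (isPath_iff_nil.1 c.bypass_isPath).eq_nil]
  simp

theorem bodd_countP_eq (hσ : IsBalanced G σ) {u v : V} (p q : G.Walk u v) :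
    (p.edges.countP σ).bodd = (q.edges.countP σ).bodd := by
  have h := hσ.bodd_countP_eq_false (p.append q.reverse)
  rwa [edges_append, edges_reverse, List.bodd_countP_append, List.countP_reverse,
    bne_eq_false_iff_eq] at h

end IsBalanced

open SimpleGraph

theorem isBalanced_iff_switchEquiv_allPositive (G : SimpleGraph V) (σ : Sym2 V → Bool) :
    IsBalanced G σ ↔ SwitchEquiv G (fun _ => false) σ := by
  constructor
  · intro hσ
    have hroot (x : V) : G.Reachable (G.connectedComponentMk x).out x :=
      ConnectedComponent.exact (G.connectedComponentMk x).out_eq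
    refine ⟨fun x => ((hroot x).some.edges.countP σ).bodd, ?_⟩
    rintro ⟨a, b⟩ hab
    have hab : G.Adj a b := hab
    have hr : (G.connectedComponentMk a).out = (G.connectedComponentMk b).out := by
      rw [ConnectedComponent.sound hab.reachable]
    have h := hσ.bodd_countP_eq ((hroot a).some.concat hab)
      ((hroot b).some.copy hr.symm rfl)
    simp only [Walk.edges_concat, Walk.edges_copy, List.concat_eq_append,
      List.bodd_countP_append, List.bodd_countP_cons, List.countP_nil, Nat.bodd_zero,
      Bool.xor_false] at h
    rw [cutParity_mk, Bool.false_xor, ← h, ← Bool.xor_assoc, Bool.xor_self, Bool.false_xor]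
  · rintro ⟨f, hf⟩ v c ⟨hc, hodd⟩
    rw [List.countP_congr fun e he => by rw [hf e (c.edges_subset_edgeSet he), Bool.false_xor],
      Nat.odd_iff_bodd, Walk.bodd_countP_cutParity, Bool.xor_self] at hodd
    exact Bool.false_ne_true hodd

theorem isBalanced_xor_iff (G : SimpleGraph V) (σ σ' : Sym2 V → Bool) :
    IsBalanced G (fun e => σ e ^^ σ' e) ↔
      ∀ (v : V) (w : G.Walk v v), w.IsCycle → (IsNegCycle G σ w ↔ IsNegCycle G σ' w) := by
  refine forall_congr' fun v => forall_congr' fun w => ?_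
  simp only [IsNegCycle, Nat.odd_iff_bodd, List.bodd_countP_xor]
  cases (w.edges.countP σ).bodd <;> cases (w.edges.countP σ').bodd <;> simp

theorem switchEquiv_iff_switchEquiv_allPositive_xor (G : SimpleGraph V) (σ σ' : Sym2 V → Bool) :
    SwitchEquiv G σ σ' ↔ SwitchEquiv G (fun _ => false) (fun e => σ e ^^ σ' e) := by
  refine exists_congr fun f => forall₂_congr fun e _ => ?_
  dsimp only
  cases σ e <;> cases σ' e <;> cases cutParity f e <;> simp

/-- Zaslavsky. Two signatures on the same graph are switching
equivalent if and only if they determine the same set of negative cycles. -/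
theorem switchEquiv_iff_same_negCycles (G : SimpleGraph V) (σ σ' : Sym2 V → Bool) :
    SwitchEquiv G σ σ' ↔
      ∀ (v : V) (w : G.Walk v v), w.IsCycle →
        (IsNegCycle G σ w ↔ IsNegCycle G σ' w) := by
  rw [switchEquiv_iff_switchEquiv_allPositive_xor, ← isBalanced_iff_switchEquiv_allPositive,
    isBalanced_xor_iff]
end

section
/- Let (G, σ) be a k-frustrated signed graph with |E⁻_σ| = ℓ(G, σ) = k. Then (G, σ) is critically k-frustrated if and only if every positive edge of (G, σ) is contained in an equilibrated edge-cut, i.e., an edge-cut ∂(X) with d⁺(X) = d⁻(X). -/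
/-!
Signed (simple) graphs: a signature is `σ : Sym2 V → Bool` (`true` = negative edge).
Switching equivalence, frustration index, negative cycles, criticality, edge-cuts.
-/

variable {V : Type*}

/-- `e` belongs to the edge-cut `∂(X)`: exactly one endpoint of `e` lies in `X`. -/
def inCut (X : Set V) (e : Sym2 V) : Prop :=
  ∃ u v, e = s(u, v) ∧ u ∈ X ∧ v ∉ X

/-- `d⁻(X)`: the number of negative edges in the edge-cut `∂(X)`. -/
noncomputable def dNeg (G : SimpleGraph V) (σ : Sym2 V → Bool) (X : Set V) : ℕ :=
  {e ∈ G.edgeSet | inCut X e ∧ σ e = true}.ncard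

/-- `d⁺(X)`: the number of positive edges in the edge-cut `∂(X)`. -/
noncomputable def dPos (G : SimpleGraph V) (σ : Sym2 V → Bool) (X : Set V) : ℕ :=
  {e ∈ G.edgeSet | inCut X e ∧ σ e = false}.ncard


/-!
Switching at `X` changes the number of negative edges by `d⁺(X) - d⁻(X)`, and deleting an
edge lowers the number of negative edges of any signature by at most one; hence
`ℓ(G - e) ≥ k - 1` for every edge. For a negative edge `σ` itself attains `k - 1` on `G - e`.
For a positive edge `e`, a switching attaining `k - 1` on `G - e` must have exactly `k`
negative edges on `G` with `e` among them, i.e. it switches at some `X` with `e ∈ ∂(X)` and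
`d⁺(X) = d⁻(X)`; conversely such an `X` gives that switching.
-/

theorem inCut_mk_iff (X : Set V) (u v : V) :
    inCut X s(u, v) ↔ u ∈ X ∧ v ∉ X ∨ v ∈ X ∧ u ∉ X := by
  constructor
  · rintro ⟨a, b, hab, ha, hb⟩
    rcases Sym2.eq_iff.mp hab with ⟨rfl, rfl⟩ | ⟨rfl, rfl⟩ <;> tauto
  · rintro (⟨hu, hv⟩ | ⟨hv, hu⟩)
    exacts [⟨u, v, rfl, hu, hv⟩, ⟨v, u, Sym2.eq_swap, hv, hu⟩]

theorem cutParity_eq_true_iff_inCut (f : V → Bool) (e : Sym2 V) :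
    cutParity f e = true ↔ inCut {v | f v = true} e := by
  induction e using Sym2.ind with
  | _ u v =>
    change xor (f u) (f v) = true ↔ _
    cases hu : f u <;> cases hv : f v <;> simp [inCut_mk_iff, hu, hv]

def switch (σ : Sym2 V → Bool) (f : V → Bool) : Sym2 V → Bool :=
  fun e => xor (σ e) (cutParity f e)

section Switching

variable (G : SimpleGraph V) (σ : Sym2 V → Bool)

theorem switch_const_false : switch σ (fun _ => false) = σ := by
  funext e
  induction e using Sym2.ind with
  | _ u v => simp [switch, cutParity]

theorem switchEquiv_switch (f : V → Bool) : SwitchEquiv G σ (switch σ f) :=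
  ⟨f, fun _ _ => rfl⟩

theorem negEdgeCount_congr {τ : Sym2 V → Bool} (h : ∀ e ∈ G.edgeSet, σ e = τ e) :
    negEdgeCount G σ = negEdgeCount G τ := by
  unfold negEdgeCount
  congr 1
  ext e
  exact and_congr_right fun he => by rw [h e he]

theorem frustration_le_negEdgeCount_switch (f : V → Bool) :
    frustration G σ ≤ negEdgeCount G (switch σ f) :=
  Nat.sInf_le ⟨_, switchEquiv_switch G σ f, rfl⟩

theorem frustration_le_negEdgeCount : frustration G σ ≤ negEdgeCount G σ := by
  simpa [switch_const_false] using frustration_le_negEdgeCount_switch G σ fun _ => false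

theorem exists_negEdgeCount_switch_eq_frustration :
    ∃ f, negEdgeCount G (switch σ f) = frustration G σ := by
  obtain ⟨τ, ⟨f, hf⟩, hτ⟩ := Nat.sInf_mem (s := {n | ∃ τ, SwitchEquiv G σ τ ∧
    negEdgeCount G τ = n}) ⟨_, _, switchEquiv_switch G σ fun _ => false, rfl⟩
  exact ⟨f, (negEdgeCount_congr G _ fun e he => (hf e he).symm).trans hτ⟩

end Switching

theorem ncard_sep_eq_sum {α : Type*} {s : Set α} (hs : s.Finite) (p : α → Prop)
    [DecidablePred p] : {x ∈ s | p x}.ncard = ∑ x ∈ hs.toFinset, if p x then 1 else 0 := by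
  rw [← Finset.card_filter, Set.ncard_eq_toFinset_card _ (hs.sep p)]
  congr 1
  ext
  simp

section Counting

variable [Finite V] (G : SimpleGraph V)

theorem negEdgeCount_eq_deleteEdges_add (τ : Sym2 V → Bool) {e : Sym2 V}
    (he : e ∈ G.edgeSet) :
    negEdgeCount G τ = negEdgeCount (G.deleteEdges {e}) τ + if τ e = true then 1 else 0 := by
  unfold negEdgeCount
  rw [SimpleGraph.edgeSet_deleteEdges]
  have hsep : {x ∈ G.edgeSet \ {e} | τ x = true} = {x ∈ G.edgeSet | τ x = true} \ {e} := by
    ext x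
    simp only [Set.mem_ofPred_eq, Set.mem_sdiff, Set.mem_singleton_iff]
    tauto
  rw [hsep]
  split_ifs with hτ
  · have hmem : e ∈ {x ∈ G.edgeSet | τ x = true} := ⟨he, hτ⟩
    exact (Set.ncard_sdiff_singleton_add_one hmem).symm
  · rw [add_zero, Set.sdiff_singleton_eq_self fun h => hτ h.2]

theorem frustration_le_frustration_deleteEdges_add_one (σ : Sym2 V → Bool) {e : Sym2 V}
    (he : e ∈ G.edgeSet) : frustration G σ ≤ frustration (G.deleteEdges {e}) σ + 1 := by
  obtain ⟨f, hf⟩ := exists_negEdgeCount_switch_eq_frustration (G.deleteEdges {e}) σ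
  have hdel := negEdgeCount_eq_deleteEdges_add G (switch σ f) he
  have := frustration_le_negEdgeCount_switch G σ f
  split_ifs at hdel <;> omega

theorem negEdgeCount_switch_add_dNeg (σ : Sym2 V → Bool) (f : V → Bool) :
    negEdgeCount G (switch σ f) + dNeg G σ {v | f v = true} =
      negEdgeCount G σ + dPos G σ {v | f v = true} := by
  classical
  simp only [negEdgeCount, dNeg, dPos, ← cutParity_eq_true_iff_inCut,
    ncard_sep_eq_sum (Set.toFinite G.edgeSet), ← Finset.sum_add_distrib]
  refine Finset.sum_congr rfl fun e _ => ?_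
  unfold switch
  cases σ e <;> cases cutParity f e <;> simp

end Counting

section MinimumSignature

variable [Finite V] {G : SimpleGraph V} {σ : Sym2 V → Bool}

theorem frustration_deleteEdges_of_neg (hmin : negEdgeCount G σ = frustration G σ)
    {e : Sym2 V} (he : e ∈ G.edgeSet) (hneg : σ e = true) :
    frustration (G.deleteEdges {e}) σ = frustration G σ - 1 := by
  have hdel := negEdgeCount_eq_deleteEdges_add G σ he
  rw [if_pos hneg] at hdel
  have := frustration_le_negEdgeCount (G.deleteEdges {e}) σ
  have := frustration_le_frustration_deleteEdges_add_one G σ he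
  omega

theorem frustration_deleteEdges_eq_pred_iff (hmin : negEdgeCount G σ = frustration G σ)
    (hpos : 0 < frustration G σ) {e : Sym2 V} (he : e ∈ G.edgeSet) (hσe : σ e = false) :
    frustration (G.deleteEdges {e}) σ = frustration G σ - 1 ↔
      ∃ X : Set V, inCut X e ∧ dPos G σ X = dNeg G σ X := by
  have hlower := frustration_le_frustration_deleteEdges_add_one G σ he
  constructor
  · intro h
    obtain ⟨f, hf⟩ := exists_negEdgeCount_switch_eq_frustration (G.deleteEdges {e}) σ
    have hdel := negEdgeCount_eq_deleteEdges_add G (switch σ f) he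
    have hswitch := frustration_le_negEdgeCount_switch G σ f
    have hcut : cutParity f e = true := by
      by_contra hc
      rw [if_neg (by simp [switch, hσe, hc])] at hdel
      omega
    rw [if_pos (by simp [switch, hσe, hcut])] at hdel
    have hcount := negEdgeCount_switch_add_dNeg G σ f
    exact ⟨_, (cutParity_eq_true_iff_inCut f e).mp hcut, by omega⟩
  · rintro ⟨X, heX, hbal⟩
    classical
    set f : V → Bool := fun v => decide (v ∈ X)
    have hX : {v | f v = true} = X := by ext; simp [f]
    have hcut : cutParity f e = true := by rwa [cutParity_eq_true_iff_inCut, hX]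
    have hcount := negEdgeCount_switch_add_dNeg G σ f
    rw [hX] at hcount
    have hdel := negEdgeCount_eq_deleteEdges_add G (switch σ f) he
    rw [if_pos (by simp [switch, hσe, hcut])] at hdel
    have := frustration_le_negEdgeCount_switch (G.deleteEdges {e}) σ f
    omega

end MinimumSignature

/-- Let `σ` be a minimum signature with `ℓ(G, σ) = k`.  Then `(G, σ)` is
critically `k`-frustrated iff every positive edge lies in an equilibrated edge-cut. -/
theorem criticallyFrustrated_iff_equilibrated_cuts [Fintype V] (G : SimpleGraph V)
    (σ : Sym2 V → Bool) (k : ℕ) (hk : 0 < k)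
    (hσ : negEdgeCount G σ = k) (hl : frustration G σ = k) :
    CriticallyFrustrated G σ k ↔
      ∀ e ∈ G.edgeSet, σ e = false →
        ∃ X : Set V, inCut X e ∧ dPos G σ X = dNeg G σ X := by
  subst hl
  constructor
  · rintro ⟨-, hcrit⟩ e he hσe
    exact (frustration_deleteEdges_eq_pred_iff hσ hk he hσe).mp (hcrit e he)
  · refine fun hcut => ⟨rfl, fun e he => ?_⟩
    cases hσe : σ e
    · exact (frustration_deleteEdges_eq_pred_iff hσ hk he hσe).mpr (hcut e he hσe)
    · exact frustration_deleteEdges_of_neg hσ he hσe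
end

section
/- Every critically k-frustrated signed plane graph (G, σ) has at most 2k negative facial cycles. Moreover, if it has exactly 2k negative facial cycles, then these are all of its facial cycles. -/
/-!
Signed (simple) graphs: a signature is `σ : Sym2 V → Bool` (`true` = negative edge).
Here the frustration index is taken in its equivalent form: the minimum number of edges
meeting all negative cycles (the minimum size of a negative-cycle cover).
-/

variable {V : Type*}

/-- The frustration index of `(G, σ)`, in the form: the minimum number of edges meeting
every negative cycle (a cycle with an odd number of negative edges). -/
noncomputable def coverFrustration (G : SimpleGraph V) (σ : Sym2 V → Bool) : ℕ :=
  sInf {n | ∃ S : Finset (Sym2 V), ↑S ⊆ G.edgeSet ∧ S.card = n ∧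
    ∀ (v : V) (w : G.Walk v v), w.IsCycle → Odd (w.edges.countP σ) → ∃ e ∈ S, e ∈ w.edges}

/-- `(G, σ)` is critically `k`-frustrated: its frustration index is `k`, and deleting any
edge decreases the frustration index to `k - 1`. -/
def CriticallyFrustratedC (G : SimpleGraph V) (σ : Sym2 V → Bool) (k : ℕ) : Prop :=
  coverFrustration G σ = k ∧ ∀ e ∈ G.edgeSet, coverFrustration (G.deleteEdges {e}) σ = k - 1

/-- `c` is the edge set of a cycle of `G`. -/
def IsCycleEdgeSet [DecidableEq V] (G : SimpleGraph V) (c : Finset (Sym2 V)) : Prop :=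
  ∃ (v : V) (w : G.Walk v v), w.IsCycle ∧ w.edges.toFinset = c

/-!
Let `S` be a negative-cycle cover. Every negative face contains an edge of `S`, and every
edge of `S` lies on exactly two faces, so the number of negative faces plus the number of
incidences between positive faces and edges of `S` is at most `2 |S|`; taking `|S| = k` gives
the bound. By criticality every edge `e` lies in a minimum cover (`e` together with a minimum
cover of `G - e`), so when there are `2k` negative faces a positive face could contain no edge at all.
-/

namespace Multiset

variable {α : Type*} [DecidableEq α]

theorem sum_map_card_inter (F : Multiset (Finset α)) (S : Finset α) :
    (F.map fun c => (c ∩ S).card).sum = ∑ e ∈ S, F.countP (e ∈ ·) := by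
  induction F using Multiset.induction with
  | empty => simp
  | cons a F ih =>
    rw [map_cons, sum_cons, ih]
    simp only [countP_cons, Finset.sum_add_distrib, Finset.sum_boole, Nat.cast_id]
    rw [Finset.inter_comm, Finset.filter_mem_eq_inter, add_comm]

theorem card_filter_add_sum_card_inter_le {F : Multiset (Finset α)} {S : Finset α} {n : ℕ}
    (hcount : ∀ e ∈ S, F.countP (e ∈ ·) = n)
    (p : Finset α → Prop) [DecidablePred p] (hmeet : ∀ c ∈ F, p c → (c ∩ S).Nonempty) :
    card (F.filter p) + ((F.filter (¬ p ·)).map fun c => (c ∩ S).card).sum ≤ n * S.card := by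
  have hcard : card (F.filter p) ≤ ((F.filter p).map fun c => (c ∩ S).card).sum := by
    simpa using card_nsmul_le_sum (s := (F.filter p).map fun c => (c ∩ S).card) (a := 1) (by
      simp only [mem_map, mem_filter]
      rintro _ ⟨c, ⟨hc, hpc⟩, rfl⟩
      exact (hmeet c hc hpc).card_pos)
  calc card (F.filter p) + ((F.filter (¬ p ·)).map fun c => (c ∩ S).card).sum
      ≤ (F.map fun c => (c ∩ S).card).sum := by
        conv_rhs => rw [← filter_add_not p F, map_add, sum_add]
        exact Nat.add_le_add_right hcard _
    _ = n * S.card := by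
        rw [sum_map_card_inter, Finset.sum_congr rfl hcount, Finset.sum_const, smul_eq_mul,
          mul_comm]

theorem card_filter_add_card_inter_le {F : Multiset (Finset α)} {S : Finset α} {n : ℕ}
    (hcount : ∀ e ∈ S, F.countP (e ∈ ·) = n)
    (p : Finset α → Prop) [DecidablePred p] (hmeet : ∀ c ∈ F, p c → (c ∩ S).Nonempty)
    {c : Finset α} (hc : c ∈ F) (hpc : ¬ p c) :
    card (F.filter p) + (c ∩ S).card ≤ n * S.card :=
  (Nat.add_le_add_left (le_sum_of_mem (mem_map_of_mem _ (mem_filter_of_mem hc hpc))) _).trans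
    (card_filter_add_sum_card_inter_le hcount p hmeet)

end Multiset

namespace SimpleGraph

def IsNegCycleCover (G : SimpleGraph V) (σ : Sym2 V → Bool) (S : Finset (Sym2 V)) : Prop :=
  ↑S ⊆ G.edgeSet ∧ ∀ (v : V) (w : G.Walk v v), w.IsCycle → Odd (w.edges.countP σ) →
    ∃ e ∈ S, e ∈ w.edges

variable {G : SimpleGraph V} {σ : Sym2 V → Bool}

theorem coverFrustration_eq_sInf :
    coverFrustration G σ = sInf {n | ∃ S, G.IsNegCycleCover σ S ∧ S.card = n} := by
  unfold coverFrustration IsNegCycleCover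
  congr! 3 with n
  exact exists_congr fun S => by tauto

theorem exists_isNegCycleCover_card_eq_coverFrustration (h : ∃ S, G.IsNegCycleCover σ S) :
    ∃ S, G.IsNegCycleCover σ S ∧ S.card = coverFrustration G σ := by
  obtain ⟨S, hS⟩ := h
  rw [coverFrustration_eq_sInf]
  exact Nat.sInf_mem (s := {n | ∃ S, G.IsNegCycleCover σ S ∧ S.card = n}) ⟨_, S, hS, rfl⟩

theorem exists_isNegCycleCover_of_coverFrustration_pos (h : 0 < coverFrustration G σ) :
    ∃ S, G.IsNegCycleCover σ S := by
  rw [coverFrustration_eq_sInf] at h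
  obtain ⟨_, S, hS, -⟩ := Nat.nonempty_of_pos_sInf h
  exact ⟨S, hS⟩

theorem IsNegCycleCover.erase [DecidableEq V] {S : Finset (Sym2 V)}
    (hS : G.IsNegCycleCover σ S) (e : Sym2 V) :
    (G.deleteEdges {e}).IsNegCycleCover σ (S.erase e) := by
  refine ⟨fun x hx => ?_, fun v w hw hneg => ?_⟩
  · obtain ⟨hxe, hxS⟩ := Finset.mem_erase.1 hx
    exact (G.edgeSet_deleteEdges {e}).symm ▸ ⟨hS.1 hxS, hxe⟩
  · have hedges := w.edges_mapLe_eq_edges (G.deleteEdges_le {e})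
    obtain ⟨x, hxS, hxw⟩ := hS.2 v _ (hw.mapLe _) (hedges ▸ hneg)
    rw [hedges] at hxw
    have hxe : x ≠ e := by
      have := w.edges_subset_edgeSet hxw
      rw [edgeSet_deleteEdges] at this
      exact this.2
    exact ⟨x, Finset.mem_erase.2 ⟨hxe, hxS⟩, hxw⟩

theorem IsNegCycleCover.insert_of_deleteEdges [DecidableEq V] {S : Finset (Sym2 V)}
    {e : Sym2 V} (hS : (G.deleteEdges {e}).IsNegCycleCover σ S) (he : e ∈ G.edgeSet) :
    G.IsNegCycleCover σ (insert e S) := by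
  refine ⟨fun x hx => ?_, fun v w hw hneg => ?_⟩
  · rcases Finset.mem_insert.1 hx with rfl | hxS
    · exact he
    · exact edgeSet_subset_edgeSet.2 (G.deleteEdges_le {e}) (hS.1 hxS)
  · by_cases hew : e ∈ w.edges
    · exact ⟨e, Finset.mem_insert_self _ _, hew⟩
    · have hall : ∀ x ∈ w.edges, x ∉ ({e} : Set (Sym2 V)) := fun x hx hxe => hew (hxe ▸ hx)
      have hedges : (w.toDeleteEdges {e} hall).edges = w.edges := w.edges_transfer _
      obtain ⟨x, hxS, hxw⟩ := hS.2 v (w.toDeleteEdges {e} hall) (hw.toDeleteEdges _ _ _)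
        (hedges ▸ hneg)
      exact ⟨x, Finset.mem_insert_of_mem hxS, hedges ▸ hxw⟩

end SimpleGraph

open SimpleGraph

namespace IsCycleEdgeSet

variable [DecidableEq V] {G : SimpleGraph V} {c : Finset (Sym2 V)}

theorem nonempty (hc : IsCycleEdgeSet G c) : c.Nonempty := by
  obtain ⟨v, w, hw, rfl⟩ := hc
  exact List.toFinset_nonempty_iff _ |>.2 fun h => hw.not_nil (Walk.edges_eq_nil.1 h)

theorem subset_edgeSet (hc : IsCycleEdgeSet G c) : ↑c ⊆ G.edgeSet := by
  obtain ⟨v, w, -, rfl⟩ := hc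
  intro e he
  exact w.edges_subset_edgeSet (List.mem_toFinset.1 he)

theorem inter_nonempty_of_isNegCycleCover {σ : Sym2 V → Bool} {S : Finset (Sym2 V)}
    (hc : IsCycleEdgeSet G c) (hneg : Odd (c.filter (fun e => σ e = true)).card)
    (hS : G.IsNegCycleCover σ S) : (c ∩ S).Nonempty := by
  obtain ⟨v, w, hw, rfl⟩ := hc
  have hcount : w.edges.countP σ = (w.edges.toFinset.filter (fun e => σ e = true)).card := by
    rw [List.countP_eq_length_filter, ← List.toFinset_filter,
      List.toFinset_card_of_nodup (hw.edges_nodup.filter _)]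
  obtain ⟨e, heS, hew⟩ := hS.2 v w hw (hcount ▸ hneg)
  exact ⟨e, Finset.mem_inter.2 ⟨List.mem_toFinset.2 hew, heS⟩⟩

end IsCycleEdgeSet

theorem CriticallyFrustratedC.exists_isNegCycleCover_mem_card_eq [DecidableEq V]
    {G : SimpleGraph V} {σ : Sym2 V → Bool} {k : ℕ} (hcrit : CriticallyFrustratedC G σ k)
    (hk : 0 < k) {e : Sym2 V} (he : e ∈ G.edgeSet) :
    ∃ T, G.IsNegCycleCover σ T ∧ e ∈ T ∧ T.card = k := by
  obtain ⟨S, hS⟩ := exists_isNegCycleCover_of_coverFrustration_pos (hcrit.1 ▸ hk)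
  obtain ⟨S', hS', hS'card⟩ :=
    exists_isNegCycleCover_card_eq_coverFrustration ⟨_, hS.erase e⟩
  have heS' : e ∉ S' := fun h => by simpa using hS'.1 h
  refine ⟨insert e S', hS'.insert_of_deleteEdges he, Finset.mem_insert_self e S', ?_⟩
  rw [Finset.card_insert_of_notMem heS', hS'card, hcrit.2 e he]
  omega

theorem negative_faces_le_two_k_general [DecidableEq V] (G : SimpleGraph V)
    (σ : Sym2 V → Bool) (k : ℕ) (hk : 0 < k)
    (Faces : Multiset (Finset (Sym2 V)))
    (hface : ∀ c ∈ Faces, IsCycleEdgeSet G c)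
    (htwo : ∀ e ∈ G.edgeSet, Faces.countP (fun c => e ∈ c) = 2)
    (hcrit : CriticallyFrustratedC G σ k) :
    Multiset.card (Faces.filter (fun c => Odd ((c.filter (fun e => σ e = true)).card)))
        ≤ 2 * k ∧
      (Multiset.card
            (Faces.filter (fun c => Odd ((c.filter (fun e => σ e = true)).card))) = 2 * k →
        Faces.filter (fun c => Odd ((c.filter (fun e => σ e = true)).card)) = Faces) := by
  have hcount (S : Finset (Sym2 V)) (hS : G.IsNegCycleCover σ S) :
      ∀ e ∈ S, Faces.countP (e ∈ ·) = 2 := fun e he => htwo e (hS.1 he)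
  have hmeet (S : Finset (Sym2 V)) (hS : G.IsNegCycleCover σ S) :
      ∀ c ∈ Faces, Odd ((c.filter (fun e => σ e = true)).card) → (c ∩ S).Nonempty :=
    fun c hc hneg => (hface c hc).inter_nonempty_of_isNegCycleCover hneg hS
  obtain ⟨S, hS, hSk⟩ := exists_isNegCycleCover_card_eq_coverFrustration
    (exists_isNegCycleCover_of_coverFrustration_pos (hcrit.1 ▸ hk))
  rw [hcrit.1] at hSk
  have hle := Multiset.card_filter_add_sum_card_inter_le (hcount S hS) _ (hmeet S hS)
  refine ⟨by omega, fun hcard => Multiset.filter_eq_self.2 fun c hc => ?_⟩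
  by_contra hpos
  obtain ⟨e, hec⟩ := (hface c hc).nonempty
  obtain ⟨T, hT, heT, hTk⟩ :=
    hcrit.exists_isNegCycleCover_mem_card_eq hk ((hface c hc).subset_edgeSet hec)
  have hcT : 0 < (c ∩ T).card := Finset.card_pos.2 ⟨e, Finset.mem_inter.2 ⟨hec, heT⟩⟩
  have := Multiset.card_filter_add_card_inter_le (hcount T hT) _ (hmeet T hT) hc hpos
  omega

/-- A critically `k`-frustrated signed plane graph (given via its family
of facial cycles, every edge lying on exactly two of them) has at most `2k` negative
facial cycles; if it has exactly `2k` negative facial cycles, these are all of its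
facial cycles. -/
theorem negative_faces_le_two_k [Fintype V] [DecidableEq V] (G : SimpleGraph V)
    (σ : Sym2 V → Bool) (k : ℕ) (hk : 0 < k)
    (Faces : Multiset (Finset (Sym2 V)))
    (hface : ∀ c ∈ Faces, IsCycleEdgeSet G c)
    (htwo : ∀ e ∈ G.edgeSet, Faces.countP (fun c => e ∈ c) = 2)
    (hcrit : CriticallyFrustratedC G σ k) :
    Multiset.card (Faces.filter (fun c => Odd ((c.filter (fun e => σ e = true)).card)))
        ≤ 2 * k ∧
      (Multiset.card
            (Faces.filter (fun c => Odd ((c.filter (fun e => σ e = true)).card))) = 2 * k →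
        Faces.filter (fun c => Odd ((c.filter (fun e => σ e = true)).card)) = Faces) :=
  negative_faces_le_two_k_general G σ k hk Faces hface htwo hcrit
end

section
/- Let (G, σ) be a (K₅, −)-minor-free critically k-frustrated signed graph admitting a ≤₂-negative cycle cover 𝒞 with |𝒞| = 2k (each edge lies in at most two cycles of 𝒞). Then 𝒞 is a negative cycle double cover: every edge of G lies in exactly two cycles of 𝒞. -/
/-!
Signed (simple) graphs: a signature is `σ : Sym2 V → Bool` (`true` = negative edge).
Here the frustration index is taken in its equivalent form: the minimum number of edges
meeting all negative cycles (the minimum size of a negative-cycle cover).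
-/

variable {V : Type*}

/-- `c` is the edge set of a negative cycle of `(G, σ)`. -/
def IsNegCycleEdgeSet [DecidableEq V] (G : SimpleGraph V) (σ : Sym2 V → Bool)
    (c : Finset (Sym2 V)) : Prop :=
  IsCycleEdgeSet G c ∧ Odd ((c.filter (fun e => σ e = true)).card)

/-!
Delete an edge `e` that lies in at most one cycle of `𝒞`. The remaining cycles are negative
cycles of `G - e` using each edge at most twice, and there are at least `2k - 1` of them. By
criticality `ℓ(G - e) = k - 1`, so Schrijver's bound allows at most `2k - 2` such cycles.
-/

section

variable [DecidableEq V] {G : SimpleGraph V} {σ : Sym2 V → Bool}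

theorem IsCycleEdgeSet.deleteEdges {c : Finset (Sym2 V)} {F : Set (Sym2 V)}
    (hc : IsCycleEdgeSet G c) (hF : ∀ e ∈ c, e ∉ F) : IsCycleEdgeSet (G.deleteEdges F) c := by
  obtain ⟨v, w, hw, rfl⟩ := hc
  exact ⟨v, w.toDeleteEdges F fun e he => hF e (List.mem_toFinset.mpr he),
    hw.transfer _, by rw [SimpleGraph.Walk.edges_transfer]⟩

def IsLeTwoNegCycleCover (G : SimpleGraph V) (σ : Sym2 V → Bool)
    (𝒞 : Multiset (Finset (Sym2 V))) : Prop :=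
  (∀ c ∈ 𝒞, IsNegCycleEdgeSet G σ c) ∧ ∀ e ∈ G.edgeSet, 𝒞.countP (fun c => e ∈ c) ≤ 2

theorem IsLeTwoNegCycleCover.filter_notMem {𝒞 : Multiset (Finset (Sym2 V))}
    (h𝒞 : IsLeTwoNegCycleCover G σ 𝒞) (e : Sym2 V) :
    IsLeTwoNegCycleCover (G.deleteEdges {e}) σ (𝒞.filter fun c => e ∉ c) := by
  refine ⟨fun c hc => ?_, fun f hf => ?_⟩
  · rw [Multiset.mem_filter] at hc
    obtain ⟨hcyc, hodd⟩ := h𝒞.1 c hc.1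
    exact ⟨hcyc.deleteEdges fun f hf hfe => hc.2 (Set.mem_singleton_iff.mp hfe ▸ hf), hodd⟩
  · exact (Multiset.countP_le_of_le _ (Multiset.filter_le _ 𝒞)).trans
      (h𝒞.2 f (SimpleGraph.edgeSet_mono (G.deleteEdges_le {e}) hf))

end

theorem negCycleCover_is_doubleCover_general [DecidableEq V] (G : SimpleGraph V)
    (σ : Sym2 V → Bool) (k : ℕ) (hk : 0 < k)
    (hcrit : CriticallyFrustratedC G σ k)
    (𝒞 : Multiset (Finset (Sym2 V)))
    (hneg : ∀ c ∈ 𝒞, IsNegCycleEdgeSet G σ c)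
    (hcard : Multiset.card 𝒞 = 2 * k)
    (hle2 : ∀ e ∈ G.edgeSet, 𝒞.countP (fun c => e ∈ c) ≤ 2)
    (hSchrijver : ∀ (F : Set (Sym2 V)) (𝒟 : Multiset (Finset (Sym2 V))),
      (∀ c ∈ 𝒟, IsNegCycleEdgeSet (G.deleteEdges F) σ c) →
      (∀ e ∈ (G.deleteEdges F).edgeSet, 𝒟.countP (fun c => e ∈ c) ≤ 2) →
      Multiset.card 𝒟 ≤ 2 * coverFrustration (G.deleteEdges F) σ) :
    ∀ e ∈ G.edgeSet, 𝒞.countP (fun c => e ∈ c) = 2 := by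
  intro e he
  by_contra hne
  have hle1 : 𝒞.countP (fun c => e ∈ c) ≤ 1 := by have := hle2 e he; omega
  have hsplit := Multiset.card_eq_countP_add_countP (fun c => e ∈ c) 𝒞
  rw [Multiset.countP_eq_card_filter (fun c => e ∉ c)] at hsplit
  obtain ⟨hneg', hle2'⟩ := (show IsLeTwoNegCycleCover G σ 𝒞 from ⟨hneg, hle2⟩).filter_notMem e
  have hupper := hSchrijver {e} _ hneg' hle2'
  rw [hcrit.2 e he] at hupper
  omega

/-- Let `(G, σ)` be a critically `k`-frustrated signed graph, assumed
`(K₅, -)`-minor-free via the Schrijver bound `hSchrijver` (valid for it and all of its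
subgraphs): any family of negative cycles using each edge at most twice has size at most
twice the frustration index.  If `𝒞` is a family of `2k` negative cycles with every edge
of `G` in at most two of them, then every edge of `G` lies in exactly two cycles of `𝒞`
(`𝒞` is a negative cycle double cover). -/
theorem negCycleCover_is_doubleCover [Fintype V] [DecidableEq V] (G : SimpleGraph V)
    (σ : Sym2 V → Bool) (k : ℕ) (hk : 0 < k)
    (hcrit : CriticallyFrustratedC G σ k)
    (𝒞 : Multiset (Finset (Sym2 V)))
    (hneg : ∀ c ∈ 𝒞, IsNegCycleEdgeSet G σ c)
    (hcard : Multiset.card 𝒞 = 2 * k)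
    (hle2 : ∀ e ∈ G.edgeSet, 𝒞.countP (fun c => e ∈ c) ≤ 2)
    (hSchrijver : ∀ (F : Set (Sym2 V)) (𝒟 : Multiset (Finset (Sym2 V))),
      (∀ c ∈ 𝒟, IsNegCycleEdgeSet (G.deleteEdges F) σ c) →
      (∀ e ∈ (G.deleteEdges F).edgeSet, 𝒟.countP (fun c => e ∈ c) ≤ 2) →
      Multiset.card 𝒟 ≤ 2 * coverFrustration (G.deleteEdges F) σ) :
    ∀ e ∈ G.edgeSet, 𝒞.countP (fun c => e ∈ c) = 2 :=
  negCycleCover_is_doubleCover_general G σ k hk hcrit 𝒞 hneg hcard hle2 hSchrijver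
end

section
/- Let (G, σ) be a signed graph whose underlying graph G is Eulerian and which has no (K₅, −)-minor; assume (by Schrijver's theorem) that the maximum number of pairwise edge-disjoint negative cycles equals ℓ(G, σ). Then for the signed graph (G', σ') obtained from (G, σ) by doubling every edge (each new edge with the same sign as its original), one has ℓ(G', σ') = 2·ℓ(G, σ). -/
/-!
Signed multigraphs (loops and parallel edges allowed): an edge type `E` with an endpoint
map `ends : E → Sym2 V` and a signature `σ : E → Bool` (`true` = negative edge).
-/

/-- A multigraph on vertices `V` with edges `E`: each edge has an unordered pair of
endpoints (a loop has endpoints `s(v, v)`). -/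
structure Multigraph (V E : Type*) where
  ends : E → Sym2 V

namespace Multigraph

variable {V E : Type*}

/-- A cycle of a multigraph: cyclically ordered pairwise distinct vertices
`v₀, …, vₙ` together with pairwise distinct edges `e₀, …, eₙ` where `eᵢ` joins
`vᵢ` and `vᵢ₊₁` (indices mod `n + 1`).  With `n = 0` this is a loop, with `n = 1`
a pair of parallel edges. -/
structure Cycle (G : Multigraph V E) where
  n : ℕ
  vert : Fin (n + 1) → V
  edge : Fin (n + 1) → E
  vinj : Function.Injective vert
  einj : Function.Injective edge
  hends : ∀ i, G.ends (edge i) = s(vert i, vert (i + 1))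

/-- A cycle is negative if it contains an odd number of negative edges. -/
def Cycle.IsNeg {G : Multigraph V E} (σ : E → Bool) (c : G.Cycle) : Prop :=
  Odd ((Finset.univ.filter (fun i => σ (c.edge i) = true)).card)

/-- The edge set of a cycle. -/
def Cycle.edgeFinset [DecidableEq E] {G : Multigraph V E} (c : G.Cycle) : Finset E :=
  Finset.univ.image c.edge

/-- `s` is the edge set of a negative cycle of `(G, σ)`. -/
def IsNegCycleEdgeSet [DecidableEq E] (G : Multigraph V E) (σ : E → Bool)
    (s : Finset E) : Prop :=
  ∃ c : G.Cycle, c.IsNeg σ ∧ c.edgeFinset = s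

/-- The frustration index of `(G, σ)`, in the form: the minimum number of edges meeting
every negative cycle. -/
noncomputable def coverFrustration [Fintype E] (G : Multigraph V E) (σ : E → Bool) : ℕ :=
  sInf {n | ∃ S : Finset E, S.card = n ∧ ∀ c : G.Cycle, c.IsNeg σ → ∃ i, c.edge i ∈ S}

/-- The degree of a vertex in a multigraph (loops count twice). -/
def degree [Fintype E] [DecidableEq V] (G : Multigraph V E) (v : V) : ℕ :=
  ∑ e, (if G.ends e = s(v, v) then 2 else if v ∈ G.ends e then 1 else 0)

/-- Doubling every edge of a multigraph: the edge type becomes `E ⊕ E`, both copies of an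
edge keeping its original endpoints. -/
def double (G : Multigraph V E) : Multigraph V (E ⊕ E) :=
  ⟨fun e => G.ends (Sum.elim id id e)⟩

end Multigraph

/-!
Every negative cycle of the doubled graph uses at most one copy of each edge, because the
only cycle through both copies of an edge is the positive digon they form. Hence negative
cycles of the doubled graph are copies of negative cycles of `G`, and a minimum cover of
`G` taken twice covers them all: `ℓ(G') ≤ 2ℓ(G)`. Conversely the two copies of a packing
of `ℓ(G)` edge-disjoint negative cycles form a packing of `2ℓ(G)` negative cycles in the
doubled graph, and every cover needs one edge from each of them: `2ℓ(G) ≤ ℓ(G')`.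
-/

namespace Multigraph

variable {V E F : Type*}

namespace Cycle

variable {G : Multigraph V E} {H : Multigraph V F}

def mapEdges (c : G.Cycle) (f : E → F) (hf : Function.Injective (f ∘ c.edge))
    (hends : ∀ e, H.ends (f e) = G.ends e) : H.Cycle where
  n := c.n
  vert := c.vert
  edge := f ∘ c.edge
  vinj := c.vinj
  einj := hf
  hends i := (hends _).trans (c.hends i)

lemma isNeg_mapEdges {c : G.Cycle} {f : E → F} {hf : Function.Injective (f ∘ c.edge)}
    {hends : ∀ e, H.ends (f e) = G.ends e} {τ : F → Bool} :
    (c.mapEdges f hf hends).IsNeg τ ↔ c.IsNeg (τ ∘ f) :=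
  Iff.rfl

lemma edgeFinset_mapEdges [DecidableEq E] [DecidableEq F] {c : G.Cycle} {f : E → F}
    {hf : Function.Injective (f ∘ c.edge)} {hends : ∀ e, H.ends (f e) = G.ends e} :
    (c.mapEdges f hf hends).edgeFinset = c.edgeFinset.image f := by
  rw [edgeFinset, edgeFinset, Finset.image_image]
  rfl

lemma n_eq_one_of_ends_eq (c : G.Cycle) {i j : Fin (c.n + 1)} (hij : i ≠ j)
    (h : G.ends (c.edge i) = G.ends (c.edge j)) : c.n = 1 := by
  rw [c.hends, c.hends, Sym2.eq_iff] at h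
  rcases h with ⟨h, -⟩ | ⟨h₁, h₂⟩
  · exact absurd (c.vinj h) hij
  · have hi := congrArg Fin.val (c.vinj h₁)
    have hj := congrArg Fin.val (c.vinj h₂)
    have := Fin.val_ne_of_ne hij
    rw [Fin.val_add_one] at hi hj
    split_ifs at hi hj with hlast_j hlast_i hlast_i <;>
      simp only [Fin.ext_iff, Fin.val_last] at hlast_j hlast_i <;> omega

lemma not_isNeg_of_ends_eq_of_sign_eq (c : G.Cycle) (σ : E → Bool) {i j : Fin (c.n + 1)}
    (hij : i ≠ j) (hends : G.ends (c.edge i) = G.ends (c.edge j))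
    (hσ : σ (c.edge i) = σ (c.edge j)) : ¬ c.IsNeg σ := by
  have hn := c.n_eq_one_of_ends_eq hij hends
  obtain ⟨n, vert, edge, vinj, einj, hends⟩ := c
  subst hn
  have h01 : σ (edge 0) = σ (edge 1) := by
    fin_cases i <;> fin_cases j <;> first | exact absurd rfl hij | exact hσ | exact hσ.symm
  rw [IsNeg, Finset.card_filter, Fin.sum_univ_two, h01]
  cases σ (edge 1) <;> decide

end Cycle

def IsNegCycleCover (G : Multigraph V E) (σ : E → Bool) (S : Finset E) : Prop :=
  ∀ c : G.Cycle, c.IsNeg σ → ∃ i, c.edge i ∈ S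

def IsNegCyclePacking [DecidableEq E] {ι : Type*} (G : Multigraph V E) (σ : E → Bool)
    (s : ι → Finset E) : Prop :=
  (∀ i, G.IsNegCycleEdgeSet σ (s i)) ∧ Pairwise (Function.onFun Disjoint s)

section Cover

variable {G : Multigraph V E} {σ : E → Bool}

lemma coverFrustration_le_card [Fintype E] {S : Finset E} (hS : G.IsNegCycleCover σ S) :
    G.coverFrustration σ ≤ S.card :=
  Nat.sInf_le ⟨S, rfl, hS⟩

lemma exists_isNegCycleCover_card_eq [Fintype E] :
    ∃ S : Finset E, G.IsNegCycleCover σ S ∧ S.card = G.coverFrustration σ := by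
  have hne : {n | ∃ S : Finset E, S.card = n ∧ G.IsNegCycleCover σ S}.Nonempty :=
    ⟨_, Finset.univ, rfl, fun _ _ => ⟨0, Finset.mem_univ _⟩⟩
  obtain ⟨S, hcard, hS⟩ := Nat.sInf_mem hne
  exact ⟨S, hS, hcard⟩

lemma IsNegCycleCover.exists_mem [DecidableEq E] {S s : Finset E}
    (hS : G.IsNegCycleCover σ S) (hs : G.IsNegCycleEdgeSet σ s) : ∃ e ∈ s, e ∈ S := by
  obtain ⟨c, hneg, rfl⟩ := hs
  obtain ⟨i, hi⟩ := hS c hneg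
  exact ⟨c.edge i, Finset.mem_image_of_mem _ (Finset.mem_univ i), hi⟩

lemma IsNegCyclePacking.card_le_card [DecidableEq E] {ι : Type*} [Fintype ι]
    {s : ι → Finset E} (hs : G.IsNegCyclePacking σ s) {S : Finset E}
    (hS : G.IsNegCycleCover σ S) : Fintype.card ι ≤ S.card := by
  choose x hxs hxS using fun i => hS.exists_mem (hs.1 i)
  have hinj : Function.Injective x := fun i j hij => by
    by_contra hne
    exact Finset.disjoint_left.mp (hs.2 hne) (hxs i) (hij ▸ hxs j)
  exact Finset.card_le_card_of_injOn x (fun i _ => hxS i) hinj.injOn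

lemma IsNegCyclePacking.card_le_coverFrustration [Fintype E] [DecidableEq E] {ι : Type*}
    [Fintype ι] {s : ι → Finset E} (hs : G.IsNegCyclePacking σ s) :
    Fintype.card ι ≤ G.coverFrustration σ := by
  obtain ⟨S, hS, hcard⟩ := exists_isNegCycleCover_card_eq (G := G) (σ := σ)
  exact hcard ▸ hs.card_le_card hS

end Cover

section Double

variable {G : Multigraph V E} {σ : E → Bool}

lemma IsNegCycleEdgeSet.map [DecidableEq E] [DecidableEq F] {H : Multigraph V F}
    {τ : F → Bool} (f : E ↪ F) (hends : ∀ e, H.ends (f e) = G.ends e) {s : Finset E}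
    (hs : G.IsNegCycleEdgeSet (τ ∘ f) s) : H.IsNegCycleEdgeSet τ (s.map f) := by
  obtain ⟨c, hc, rfl⟩ := hs
  exact ⟨c.mapEdges f (f.injective.comp c.einj) hends, Cycle.isNeg_mapEdges.mpr hc,
    by rw [Cycle.edgeFinset_mapEdges, Finset.map_eq_image]⟩

lemma Cycle.injective_elim_edge_of_isNeg (c : G.double.Cycle)
    (hc : c.IsNeg (σ ∘ Sum.elim id id)) : Function.Injective (Sum.elim id id ∘ c.edge) :=
  fun _ _ hij => by_contra fun hne =>
    c.not_isNeg_of_ends_eq_of_sign_eq _ hne (congrArg G.ends hij) (congrArg σ hij) hc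

lemma IsNegCycleCover.double {S : Finset E} (hS : G.IsNegCycleCover σ S) :
    G.double.IsNegCycleCover (σ ∘ Sum.elim id id) (S.disjSum S) := by
  intro c hc
  obtain ⟨i, hi⟩ := hS (c.mapEdges _ (c.injective_elim_edge_of_isNeg hc) fun _ => rfl)
    (Cycle.isNeg_mapEdges.mpr hc)
  refine ⟨i, ?_⟩
  change Sum.elim id id (c.edge i) ∈ S at hi
  generalize c.edge i = e at hi ⊢
  rcases e with e | e
  · exact Finset.inl_mem_disjSum.mpr hi
  · exact Finset.inr_mem_disjSum.mpr hi

lemma IsNegCyclePacking.double [DecidableEq E] {ι : Type*} {s : ι → Finset E}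
    (hs : G.IsNegCyclePacking σ s) :
    G.double.IsNegCyclePacking (σ ∘ Sum.elim id id)
      (Sum.elim (fun i => (s i).map .inl) (fun i => (s i).map .inr)) := by
  refine ⟨fun k => ?_, ?_⟩
  · rcases k with i | i
    · exact (hs.1 i).map _ fun _ => rfl
    · exact (hs.1 i).map _ fun _ => rfl
  · rintro (i | i) (j | j) hne
    · exact (Finset.disjoint_map _).mpr (hs.2 fun h => hne (congrArg _ h))
    · exact Finset.disjoint_map_inl_map_inr _ _
    · exact (Finset.disjoint_map_inl_map_inr _ _).symm
    · exact (Finset.disjoint_map _).mpr (hs.2 fun h => hne (congrArg _ h))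

end Double

end Multigraph

theorem frustration_double_eq_two_mul_general {V E : Type*} [Fintype E]
    [DecidableEq E] (G : Multigraph V E) (σ : E → Bool)
    (hpack : ∃ s : Fin (G.coverFrustration σ) → Finset E,
      (∀ i, Multigraph.IsNegCycleEdgeSet G σ (s i)) ∧
        ∀ i j, i ≠ j → Disjoint (s i) (s j)) :
    (G.double).coverFrustration (fun e => σ (Sum.elim id id e)) =
      2 * G.coverFrustration σ := by
  obtain ⟨s, hs⟩ := hpack
  obtain ⟨S, hS, hcard⟩ := G.exists_isNegCycleCover_card_eq (σ := σ)
  apply le_antisymm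
  · calc _ ≤ (S.disjSum S).card := Multigraph.coverFrustration_le_card hS.double
      _ = 2 * G.coverFrustration σ := by rw [Finset.card_disjSum, hcard, two_mul]
  · have h := (Multigraph.IsNegCyclePacking.double hs).card_le_coverFrustration
    rwa [Fintype.card_sum, Fintype.card_fin, ← two_mul] at h

/-- Let `(G, σ)` be an Eulerian signed multigraph for which (by
Schrijver's theorem for Eulerian `(K₅, -)`-minor-free signed graphs) the maximum number
of pairwise edge-disjoint negative cycles equals the frustration index.  Then doubling
every edge doubles the frustration index. -/
theorem frustration_double_eq_two_mul {V E : Type*} [DecidableEq V] [Fintype E]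
    [DecidableEq E] (G : Multigraph V E) (σ : E → Bool)
    (heuler : ∀ v : V, Even (G.degree v))
    (hpack : ∃ s : Fin (G.coverFrustration σ) → Finset E,
      (∀ i, Multigraph.IsNegCycleEdgeSet G σ (s i)) ∧
        ∀ i j, i ≠ j → Disjoint (s i) (s j))
    (hmax : ∀ (m : ℕ) (s : Fin m → Finset E),
      (∀ i, Multigraph.IsNegCycleEdgeSet G σ (s i)) →
      (∀ i j, i ≠ j → Disjoint (s i) (s j)) → m ≤ G.coverFrustration σ) :
    (G.double).coverFrustration (fun e => σ (Sum.elim id id e)) =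
      2 * G.coverFrustration σ :=
  frustration_double_eq_two_mul_general G σ hpack
end
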